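/- An orthogonal lub-complete poset P is orthomodular if and only if for all x, y ∈ P, x ≤ y ⇔ x →_K y = {1}, and also if and only if x ≤ y ⇔ x →_N y = {1}. -/
import Mathlib


open Set

variable {P : Type*} [PartialOrder P] [BoundedOrder P]

/-- Maximal elements of a subset of a poset. -/
def MaxE (A : Set P) : Set P := {m | m ∈ A ∧ ∀ x ∈ A, m ≤ x → x = m}

/-- Minimal elements of a subset of a poset. -/
def MinE (A : Set P) : Set P := {m | m ∈ A ∧ ∀ x ∈ A, x ≤ m → x = m}

/-- `c` is an antitone involution. -/
def HasAntitoneInvol (c : P → P) : Prop :=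
  (∀ x y : P, x ≤ y → c y ≤ c x) ∧ ∀ x : P, c (c x) = x

/-- Orthogonality: the join of two orthogonal elements exists. -/
def IsOrthogonalPoset (c : P → P) : Prop :=
  ∀ x y : P, x ≤ c y → ∃ z, IsLUB {x, y} z

/-- lub-complete (together with its dual, mub-complete): every lower bound of a
finite set lies below a maximal lower bound, and dually. -/
def IsLubComplete : Prop :=
  (∀ A : Set P, A.Finite → ∀ x ∈ lowerBounds A, ∃ m ∈ MaxE (lowerBounds A), x ≤ m) ∧
  (∀ A : Set P, A.Finite → ∀ x ∈ upperBounds A, ∃ m ∈ MinE (upperBounds A), m ≤ x)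

/-- Distributivity of a poset via the LU-identity L(U(x,y),z) = LU(L(x,z),L(y,z)). -/
def IsDistribPoset : Prop :=
  ∀ x y z : P, lowerBounds (upperBounds {x, y} ∪ {z}) =
    lowerBounds (upperBounds (lowerBounds ({x, z} : Set P) ∪ lowerBounds ({y, z} : Set P)))

/-- `c x` is a complement of `x`: L(x, x') = L(P) and U(x, x') = U(P). -/
def IsComplementedBy (c : P → P) : Prop :=
  ∀ x : P, lowerBounds ({x, c x} : Set P) = lowerBounds (univ : Set P) ∧
    upperBounds ({x, c x} : Set P) = upperBounds (univ : Set P)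

/-- Orthocomplemented: x ∨ x' = 1 for all x. -/
def IsOrthocomplemented (c : P → P) : Prop := ∀ x : P, IsLUB {x, c x} ⊤

/-- Paraorthomodular: x ≤ y and x' ∧ y = 0 imply x = y. -/
def IsParaOM (c : P → P) : Prop :=
  ∀ x y : P, x ≤ y → IsGLB {c x, y} ⊥ → x = y

/-- Orthomodular poset: orthogonal and x ≤ y implies x ∨ (y ∧ x') = y. -/
def IsOM (c : P → P) : Prop :=
  IsOrthogonalPoset c ∧ ∀ x y : P, x ≤ y → ∃ m, IsGLB {y, c x} m ∧ IsLUB {x, m} y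

/-- Weakly Boolean: x ∧ y = 0 and x ∧ y' = 0 imply x = 0. -/
def IsWeaklyBoolean (c : P → P) : Prop :=
  ∀ x y : P, IsGLB {x, y} ⊥ → IsGLB {x, c y} ⊥ → x = ⊥

/-- Classical implication x →_C y := Min U(x', y). -/
def impC (c : P → P) (x y : P) : Set P := MinE (upperBounds ({c x, y} : Set P))

/-- Sasaki implication x →_S y := x' ∨ Max L(x, y). -/
def impS (c : P → P) (x y : P) : Set P :=
  {z | ∃ w ∈ MaxE (lowerBounds ({x, y} : Set P)), IsLUB {c x, w} z}

/-- Dishkant implication x →_D y := y ∨ Max L(x', y'). -/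
def impD (c : P → P) (x y : P) : Set P :=
  {z | ∃ w ∈ MaxE (lowerBounds ({c x, c y} : Set P)), IsLUB {y, w} z}

/-- Kalmbach implication
x →_K y := Max L(x',y) ∨ Max L(x',y') ∨ (x ∧ Min U(x',y)). -/
def impK (c : P → P) (x y : P) : Set P :=
  {z | ∃ a ∈ MaxE (lowerBounds ({c x, y} : Set P)),
       ∃ b ∈ MaxE (lowerBounds ({c x, c y} : Set P)),
       ∃ u ∈ MinE (upperBounds ({c x, y} : Set P)),
       ∃ m, IsGLB {x, u} m ∧ IsLUB {a, b, m} z}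

/-- Non-tolens implication x →_N y := y' →_K x'. -/
def impN (c : P → P) (x y : P) : Set P := impK c (c y) (c x)

section Stmt13Helpers

variable {c : P → P}

lemma lb_pair {a b t : P} : t ∈ lowerBounds ({a, b} : Set P) ↔ t ≤ a ∧ t ≤ b := by
  constructor
  · intro h; exact ⟨h (by simp), h (by simp)⟩
  · rintro ⟨h1, h2⟩ x hx
    rcases hx with rfl | hx
    · exact h1
    · rw [Set.mem_singleton_iff] at hx; subst hx; exact h2

lemma ub_pair {a b t : P} : t ∈ upperBounds ({a, b} : Set P) ↔ a ≤ t ∧ b ≤ t := by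
  constructor
  · intro h; exact ⟨h (by simp), h (by simp)⟩
  · rintro ⟨h1, h2⟩ x hx
    rcases hx with rfl | hx
    · exact h1
    · rw [Set.mem_singleton_iff] at hx; subst hx; exact h2

lemma ub_triple {a b m t : P} :
    t ∈ upperBounds ({a, b, m} : Set P) ↔ a ≤ t ∧ b ≤ t ∧ m ≤ t := by
  constructor
  · intro h; exact ⟨h (by simp), h (by simp), h (by simp)⟩
  · rintro ⟨h1, h2, h3⟩ x hx
    rcases hx with rfl | hx
    · exact h1
    · rcases hx with rfl | hx
      · exact h2
      · rw [Set.mem_singleton_iff] at hx; subst hx; exact h3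

lemma c_top (hinv : HasAntitoneInvol c) : c ⊤ = ⊥ := by
  have h : c ⊤ ≤ c (c ⊥) := hinv.1 _ _ le_top
  rw [hinv.2] at h
  exact le_antisymm h bot_le

lemma c_bot (hinv : HasAntitoneInvol c) : c ⊥ = ⊤ := by
  rw [← c_top hinv, hinv.2]

lemma lub_to_glb (hinv : HasAntitoneInvol c) {p q r : P} (h : IsLUB ({p, q} : Set P) r) :
    IsGLB ({c p, c q} : Set P) (c r) := by
  constructor
  · exact lb_pair.mpr ⟨hinv.1 _ _ (h.1 (by simp)), hinv.1 _ _ (h.1 (by simp))⟩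
  · intro t ht
    obtain ⟨h1, h2⟩ := lb_pair.mp ht
    have hp : p ≤ c t := by have := hinv.1 _ _ h1; rwa [hinv.2] at this
    have hq : q ≤ c t := by have := hinv.1 _ _ h2; rwa [hinv.2] at this
    have hr : r ≤ c t := h.2 (ub_pair.mpr ⟨hp, hq⟩)
    have := hinv.1 _ _ hr; rwa [hinv.2] at this

lemma glb_bot_of_lub_top (hinv : HasAntitoneInvol c)
    (hoc : ∀ w : P, IsLUB ({w, c w} : Set P) ⊤) (x : P) :
    IsGLB ({x, c x} : Set P) ⊥ := by
  have h := lub_to_glb hinv (hoc x)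
  rw [hinv.2, c_top hinv] at h
  rwa [Set.pair_comm] at h

lemma om_ortho_top (hinv : HasAntitoneInvol c) (hom : IsOM c) (x : P) :
    IsLUB ({x, c x} : Set P) ⊤ := by
  obtain ⟨m, hg, hl⟩ := hom.2 x ⊤ le_top
  have hm : m = c x :=
    le_antisymm (hg.1 (by simp)) (hg.2 (lb_pair.mpr ⟨le_top, le_rfl⟩))
  rwa [hm] at hl

lemma om_paraOM (hinv : HasAntitoneInvol c) (hom : IsOM c) : IsParaOM c := by
  intro x y hxy h0
  obtain ⟨m, hg, hl⟩ := hom.2 x y hxy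
  have hm : m = ⊥ :=
    le_antisymm (h0.2 (lb_pair.mpr ⟨hg.1 (by simp), hg.1 (by simp)⟩)) bot_le
  rw [hm] at hl
  exact le_antisymm hxy (hl.2 (ub_pair.mpr ⟨le_rfl, bot_le⟩))

end Stmt13Helpers

section Stmt13Main

variable {c : P → P}

lemma om_to_K (hinv : HasAntitoneInvol c) (horth : IsOrthogonalPoset c)
    (hlub : IsLubComplete (P := P)) (hom : IsOM c) :
    ∀ x y : P, x ≤ y ↔ impK c x y = {(⊤ : P)} := by
  have hpom := om_paraOM hinv hom
  intro x y
  constructor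
  · intro hxy
    obtain ⟨g, hg, hgl⟩ := hom.2 x y hxy
    have hgy : g ≤ y := hg.1 (by simp)
    have hgx' : g ≤ c x := hg.1 (by simp)
    have key : ∀ s ∈ upperBounds ({g, c y, x} : Set P), (⊤ : P) ≤ s := by
      intro s hs
      obtain ⟨hsg, hscy, hsx⟩ := ub_triple.mp hs
      have hys : y ≤ s := hgl.2 (ub_pair.mpr ⟨hsx, hsg⟩)
      exact (om_ortho_top hinv hom y).2 (ub_pair.mpr ⟨hys, hscy⟩)
    have htop_lub : IsLUB ({g, c y, x} : Set P) ⊤ := ⟨fun t _ => le_top, key⟩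
    ext z
    simp only [Set.mem_singleton_iff]
    constructor
    · rintro ⟨a, ha, b, hb, u, hu, m, hm, hz⟩
      have hag : a = g := by
        obtain ⟨h1, h2⟩ := lb_pair.mp ha.1
        have hle : a ≤ g := hg.2 (lb_pair.mpr ⟨h2, h1⟩)
        exact ((ha.2 g (lb_pair.mpr ⟨hgx', hgy⟩) hle)).symm
      have hbcy : b = c y := by
        have hle : b ≤ c y := (lb_pair.mp hb.1).2
        exact (hb.2 (c y) (lb_pair.mpr ⟨hinv.1 _ _ hxy, le_rfl⟩) hle).symm
      have hyu : y ≤ u := (ub_pair.mp hu.1).2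
      have hmx : m = x :=
        le_antisymm (hm.1 (by simp)) (hm.2 (lb_pair.mpr ⟨le_rfl, hxy.trans hyu⟩))
      rw [hag, hbcy, hmx] at hz
      exact le_antisymm le_top (key z hz.1)
    · rintro rfl
      obtain ⟨u, hu, -⟩ := hlub.2 ({c x, y} : Set P)
        (Set.Finite.insert _ (Set.finite_singleton _)) ⊤ (fun t _ => le_top)
      have hxu : x ≤ u := hxy.trans (ub_pair.mp hu.1).2
      refine ⟨g, ⟨lb_pair.mpr ⟨hgx', hgy⟩, ?_⟩, c y,
        ⟨lb_pair.mpr ⟨hinv.1 _ _ hxy, le_rfl⟩, ?_⟩, u, hu, x,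
        ⟨lb_pair.mpr ⟨le_rfl, hxu⟩, fun t ht => (lb_pair.mp ht).1⟩, htop_lub⟩
      · intro t ht hgt
        obtain ⟨h1, h2⟩ := lb_pair.mp ht
        exact le_antisymm (hg.2 (lb_pair.mpr ⟨h2, h1⟩)) hgt
      · intro t ht hct
        exact le_antisymm (lb_pair.mp ht).2 hct
  · intro heq
    have htopmem : (⊤ : P) ∈ impK c x y := by rw [heq]; rfl
    obtain ⟨a, ha, b, hb, u, hu, m, hm, hz⟩ := htopmem
    obtain ⟨ha1, ha2⟩ := lb_pair.mp ha.1
    obtain ⟨hb1, hb2⟩ := lb_pair.mp hb.1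
    obtain ⟨hu1, hu2⟩ := ub_pair.mp hu.1
    have hm1 : m ≤ x := hm.1 (by simp)
    have hzkey : ∀ s : P, a ≤ s → b ≤ s → m ≤ s → s = ⊤ := fun s h1 h2 h3 =>
      le_antisymm le_top (hz.2 (ub_triple.mpr ⟨h1, h2, h3⟩))
    -- Step 1: m = x
    have hmx : m = x := by
      obtain ⟨s, hs⟩ := horth m (c x) (by rw [hinv.2]; exact hm1)
      have hstop : s = ⊤ :=
        hzkey s (ha1.trans (hs.1 (by simp))) (hb1.trans (hs.1 (by simp))) (hs.1 (by simp))
      rw [hstop] at hs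
      have hglb := lub_to_glb hinv hs
      rw [hinv.2, c_top hinv] at hglb
      exact hpom m x hm1 hglb
    -- Step 2: u = ⊤, and common lower bounds of x, c y are ⊥
    have hxu : x ≤ u := by rw [← hmx]; exact hm.1 (by simp)
    have hut : u = ⊤ :=
      le_antisymm le_top ((om_ortho_top hinv hom x).2 (ub_pair.mpr ⟨hxu, hu1⟩))
    have htbot : ∀ t : P, t ≤ x → t ≤ c y → t = ⊥ := by
      intro t htx hty
      have h1 : c t ∈ upperBounds ({c x, y} : Set P) :=
        ub_pair.mpr ⟨hinv.1 _ _ htx, by have := hinv.1 _ _ hty; rwa [hinv.2] at this⟩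
      have h2 : c t = u := hu.2 (c t) h1 (by rw [hut]; exact le_top)
      rw [hut] at h2
      have h3 := congrArg c h2
      rwa [hinv.2, c_top hinv] at h3
    -- Step 4: a ∨ b = c x
    obtain ⟨s, hsab⟩ := horth b a (hb2.trans (hinv.1 _ _ ha2))
    have hsx' : s ≤ c x := hsab.2 (ub_pair.mpr ⟨hb1, ha1⟩)
    obtain ⟨r, hr⟩ := horth x s (by have := hinv.1 _ _ hsx'; rwa [hinv.2] at this)
    have hrtop : r = ⊤ :=
      hzkey r ((hsab.1 (by simp)).trans (hr.1 (by simp)))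
        ((hsab.1 (by simp)).trans (hr.1 (by simp)))
        (by rw [hmx]; exact hr.1 (by simp))
    rw [hrtop] at hr
    have hscx : s = c x := by
      have hglb := lub_to_glb hinv hr
      rw [c_top hinv, Set.pair_comm] at hglb
      exact hpom s (c x) hsx' hglb
    -- Step 5: x is the glb of {c b, c a}
    have hx_glb : IsGLB ({c b, c a} : Set P) x := by
      have h5 := lub_to_glb hinv hsab
      rwa [hscx, hinv.2] at h5
    -- Steps 6–8
    obtain ⟨w, hwglb, hwlub⟩ := hom.2 b (c y) hb2
    have hw1 : w ≤ c y := hwglb.1 (by simp)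
    have hw2 : w ≤ c b := hwglb.1 (by simp)
    have hwx : w ≤ x := hx_glb.2 (lb_pair.mpr ⟨hw2, hw1.trans (hinv.1 _ _ ha2)⟩)
    have hwbot : w = ⊥ := htbot w hwx hw1
    rw [hwbot] at hwlub
    have hcyb : c y ≤ b := hwlub.2 (ub_pair.mpr ⟨le_rfl, bot_le⟩)
    have hfin := hinv.1 _ _ (hcyb.trans hb1)
    rwa [hinv.2, hinv.2] at hfin

lemma K_to_om (hinv : HasAntitoneInvol c) (horth : IsOrthogonalPoset c)
    (hlub : IsLubComplete (P := P)) (h : ∀ x y : P, x ≤ y ↔ impK c x y = {(⊤ : P)}) :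
    IsOM c := by
  -- orthocomplemented
  have hoc : ∀ w : P, IsLUB ({w, c w} : Set P) ⊤ := by
    intro w
    have htopmem : (⊤ : P) ∈ impK c w w := by rw [(h w w).1 le_rfl]; rfl
    obtain ⟨a, ha, b, hb, u, hu, m, hm, hz⟩ := htopmem
    refine ⟨fun t _ => le_top, ?_⟩
    intro s hs
    obtain ⟨hsw, hscw⟩ := ub_pair.mp hs
    exact hz.2 (ub_triple.mpr ⟨(lb_pair.mp ha.1).2.trans hsw,
      (lb_pair.mp hb.1).1.trans hscw, (hm.1 (by simp)).trans hsw⟩)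
  have hob : ∀ w : P, IsGLB ({w, c w} : Set P) ⊥ := glb_bot_of_lub_top hinv hoc
  -- paraorthomodular
  have hpom : ∀ x y : P, x ≤ y → IsGLB ({c x, y} : Set P) ⊥ → x = y := by
    intro x y hxy h0
    have htopmem : (⊤ : P) ∈ impK c x y := by rw [(h x y).1 hxy]; rfl
    obtain ⟨a, ha, b, hb, u, hu, m, hm, hz⟩ := htopmem
    have habot : a = ⊥ := le_antisymm (h0.2 ha.1) bot_le
    have hb2 : b ≤ c y := (lb_pair.mp hb.1).2
    have hm1 : m ≤ x := hm.1 (by simp)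
    have hF : ∀ s : P, x ≤ s → c y ≤ s → s = ⊤ := by
      intro s h1 h2
      refine le_antisymm le_top (hz.2 (ub_triple.mpr ⟨?_, hb2.trans h2, hm1.trans h1⟩))
      rw [habot]; exact bot_le
    have hbkey : ∀ b₁ ∈ MaxE (lowerBounds ({c y, c x} : Set P)),
        IsLUB ({b₁, y} : Set P) ⊤ := by
      intro b₁ hb₁
      have hb₁1 : b₁ ≤ c y := (lb_pair.mp hb₁.1).1
      obtain ⟨s₀, hs₀⟩ := horth b₁ y hb₁1
      have hs₀top : s₀ = ⊤ := by
        have hty : c s₀ ≤ c y := hinv.1 _ _ (hs₀.1 (by simp))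
        have htx : c s₀ ≤ c x := hinv.1 _ _ (hxy.trans (hs₀.1 (by simp)))
        have htb : c s₀ ≤ c b₁ := hinv.1 _ _ (hs₀.1 (by simp))
        obtain ⟨t₁, ht₁⟩ := horth b₁ (c s₀) (by have := hinv.1 _ _ htb; rwa [hinv.2] at this)
        have ht₁mem : t₁ ∈ lowerBounds ({c y, c x} : Set P) :=
          lb_pair.mpr ⟨ht₁.2 (ub_pair.mpr ⟨hb₁1, hty⟩),
            ht₁.2 (ub_pair.mpr ⟨(lb_pair.mp hb₁.1).2, htx⟩)⟩
        have ht₁b : t₁ = b₁ := hb₁.2 t₁ ht₁mem (ht₁.1 (by simp))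
        have htb₁ : c s₀ ≤ b₁ := by rw [← ht₁b]; exact ht₁.1 (by simp)
        have htbot : c s₀ = ⊥ :=
          le_antisymm ((hob b₁).2 (lb_pair.mpr ⟨htb₁, htb⟩)) bot_le
        have h4 := congrArg c htbot
        rwa [hinv.2, c_bot hinv] at h4
      rwa [hs₀top] at hs₀
    have himp : impK c y x = {(⊤ : P)} := by
      ext z
      simp only [Set.mem_singleton_iff]
      constructor
      · rintro ⟨a₁, ha₁, b₁, hb₁, u₁, hu₁, m₁, hm₁, hz₁⟩
        have hu₁top : u₁ = ⊤ := hF u₁ (ub_pair.mp hu₁.1).2 (ub_pair.mp hu₁.1).1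
        have hm₁y : m₁ = y := by
          rw [hu₁top] at hm₁
          exact le_antisymm (hm₁.1 (by simp)) (hm₁.2 (lb_pair.mpr ⟨le_rfl, le_top⟩))
        have hbz : b₁ ≤ z := hz₁.1 (by simp)
        have hyz : y ≤ z := by rw [← hm₁y]; exact hz₁.1 (by simp)
        exact le_antisymm le_top ((hbkey b₁ hb₁).2 (ub_pair.mpr ⟨hbz, hyz⟩))
      · rintro rfl
        obtain ⟨b₁, hb₁, -⟩ := hlub.1 ({c y, c x} : Set P)
          (Set.Finite.insert _ (Set.finite_singleton _)) ⊥ (lb_pair.mpr ⟨bot_le, bot_le⟩)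
        refine ⟨⊥, ⟨lb_pair.mpr ⟨bot_le, bot_le⟩, ?_⟩, b₁, hb₁, ⊤,
          ⟨ub_pair.mpr ⟨le_top, le_top⟩,
            fun v hv _ => hF v (ub_pair.mp hv).2 (ub_pair.mp hv).1⟩, y,
          ⟨lb_pair.mpr ⟨le_rfl, le_top⟩, fun t ht => (lb_pair.mp ht).1⟩, ?_⟩
        · intro t ht _
          exact le_antisymm
            ((hob y).2 (lb_pair.mpr ⟨(lb_pair.mp ht).2.trans hxy, (lb_pair.mp ht).1⟩)) bot_le
        · refine ⟨fun t _ => le_top, ?_⟩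
          intro s hs
          obtain ⟨-, hbs, hys⟩ := ub_triple.mp hs
          exact (hbkey b₁ hb₁).2 (ub_pair.mpr ⟨hbs, hys⟩)
    exact le_antisymm hxy ((h y x).2 himp)
  -- assemble orthomodularity
  refine ⟨horth, ?_⟩
  intro x y hxy
  obtain ⟨s, hs⟩ := horth x (c y) (by rw [hinv.2]; exact hxy)
  have hmglb : IsGLB ({y, c x} : Set P) (c s) := by
    have h1 := lub_to_glb hinv hs
    rw [hinv.2] at h1
    rwa [Set.pair_comm] at h1
  have hmy : c s ≤ y := hmglb.1 (by simp)
  have hmcx : c s ≤ c x := hmglb.1 (by simp)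
  obtain ⟨t, htl⟩ := horth x (c s) (by rw [hinv.2]; exact hs.1 (by simp))
  have hty : t ≤ y := htl.2 (ub_pair.mpr ⟨hxy, hmy⟩)
  have hglb0 : IsGLB ({c t, y} : Set P) ⊥ := by
    refine ⟨lb_pair.mpr ⟨bot_le, bot_le⟩, ?_⟩
    intro w hw
    obtain ⟨hw1, hw2⟩ := lb_pair.mp hw
    have hwcx : w ≤ c x := hw1.trans (hinv.1 _ _ (htl.1 (by simp)))
    have hwm : w ≤ c s := hmglb.2 (lb_pair.mpr ⟨hw2, hwcx⟩)
    have hwcm : w ≤ c (c s) := hw1.trans (hinv.1 _ _ (htl.1 (by simp)))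
    exact (hob (c s)).2 (lb_pair.mpr ⟨hwm, hwcm⟩)
  have hteq : t = y := hpom t y hty hglb0
  rw [hteq] at htl
  exact ⟨c s, hmglb, htl⟩

lemma K_iff_N (hinv : HasAntitoneInvol c) :
    (∀ x y : P, x ≤ y ↔ impK c x y = {(⊤ : P)}) ↔
    (∀ x y : P, x ≤ y ↔ impN c x y = {(⊤ : P)}) := by
  have hcle : ∀ p q : P, p ≤ q ↔ c q ≤ c p := fun p q =>
    ⟨fun hh => hinv.1 _ _ hh, fun hh => by
      have := hinv.1 _ _ hh; rwa [hinv.2, hinv.2] at this⟩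
  constructor
  · intro hK x y
    rw [show impN c x y = impK c (c y) (c x) from rfl, ← hK (c y) (c x)]
    exact hcle x y
  · intro hN x y
    have h1 := hN (c y) (c x)
    rw [show impN c (c y) (c x) = impK c (c (c x)) (c (c y)) from rfl,
      hinv.2, hinv.2] at h1
    exact (hcle x y).trans h1

end Stmt13Main

/-- orthomodular iff the order property holds for →_K, iff it holds for →_N. -/
theorem stmt13 (c : P → P) (hinv : HasAntitoneInvol c) (horth : IsOrthogonalPoset c)
    (hlub : IsLubComplete (P := P)) :
    (IsOM c ↔ ∀ x y : P, x ≤ y ↔ impK c x y = {(⊤ : P)}) ∧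
    (IsOM c ↔ ∀ x y : P, x ≤ y ↔ impN c x y = {(⊤ : P)}) := by
  have h1 : IsOM c ↔ ∀ x y : P, x ≤ y ↔ impK c x y = {(⊤ : P)} :=
    ⟨fun hom => om_to_K hinv horth hlub hom, fun hK => K_to_om hinv horth hlub hK⟩
  exact ⟨h1, h1.trans (K_iff_N hinv)⟩
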